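/- arXiv:2405.07180 — 2 statements merged into one kernel-verified Lean document; each statement's English description precedes it below -/
import Mathlib

section
/- Let q be a prime power and W an m-dimensional F_q-subspace of F_{q^ℓ}, and a ∣ ℓ. Suppose dim_{F_q}(γF_{q^a} ∩ W) ∈ {0, 1} for every γ ∈ F_{q^ℓ}*. Then the number of γ ∈ F_{q^ℓ}* with dim_{F_q}(γF_{q^a} ∩ W) = 1 is exactly (q^a − 1)(q^m − 1)/(q − 1), and hence ∑_{γ ∈ F_{q^ℓ}*} dim_{F_q}(γF_{q^a} ∩ W) = (q^a − 1)(q^m − 1)/(q − 1). -/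
/-!
Double count the pairs `(γ, w)` with `γ ≠ 0` and `0 ≠ w ∈ γS ∩ W`, where `S = F_{q^a}`.
For fixed `w ∈ W \ {0}` the admissible `γ` are exactly `w x⁻¹` with `x ∈ S \ {0}`, so there
are `(q^m - 1)(q^a - 1)` pairs. For fixed `γ` there are `q^d - 1` of them, `d = dim (γS ∩ W)`,
and `q^d - 1 = (q - 1) d` because `d ≤ 1`.
-/

open Module Finset

theorem Submodule.card_filter_mem_ne_zero {K V : Type*} [Field K] [Fintype K] [AddCommGroup V]
    [Module K V] [Fintype V] [DecidableEq V] (S : Submodule K V) [DecidablePred (· ∈ S)] :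
    #{v | v ∈ S ∧ v ≠ 0} = Fintype.card K ^ finrank K S - 1 := by
  have hS : #{v | v ∈ S} = Fintype.card K ^ finrank K S := by
    rw [← card_eq_pow_finrank (K := K) (V := S)]
    simp [Fintype.card_subtype]
  rw [← hS, ← card_erase_of_mem (s := {v | v ∈ S}) (a := 0) (by simp)]
  congr 1
  ext v
  simp [and_comm]

theorem Finset.card_filter_eq_one_of_le_one {α : Type*} (s : Finset α) (f : α → ℕ)
    (hf : ∀ x ∈ s, f x ≤ 1) : #{x ∈ s | f x = 1} = ∑ x ∈ s, f x := by
  rw [card_filter]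
  refine sum_congr rfl fun x hx => ?_
  rcases Nat.le_one_iff_eq_zero_or_eq_one.mp (hf x hx) with h | h <;> simp [h]

theorem Nat.pow_sub_one_eq_mul_of_le_one {q d : ℕ} (hd : d ≤ 1) : q ^ d - 1 = (q - 1) * d := by
  interval_cases d <;> simp

theorem Submodule.mem_map_mulLeft_iff {K F : Type*} [CommSemiring K] [DivisionRing F] [Algebra K F]
    (S : Submodule K F) {γ : F} (hγ : γ ≠ 0) (w : F) :
    w ∈ S.map (LinearMap.mulLeft K γ) ↔ γ⁻¹ * w ∈ S := by
  constructor
  · rintro ⟨x, hx, rfl⟩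
    simpa [hγ] using hx
  · exact fun h => ⟨γ⁻¹ * w, h, by simp [hγ]⟩

open scoped Classical in
theorem Submodule.card_filter_mem_map_mulLeft {K F : Type*} [Field K] [Field F] [Fintype F]
    [DecidableEq F] [Algebra K F] (S : Submodule K F) {w : F} (hw : w ≠ 0) :
    #{γ | γ ≠ 0 ∧ w ∈ S.map (LinearMap.mulLeft K γ)} = #{x | x ∈ S ∧ x ≠ 0} := by
  refine card_bij' (fun γ _ => γ⁻¹ * w) (fun x _ => w * x⁻¹) ?_ ?_ ?_ ?_
  · intro γ hγ
    simp only [mem_filter, mem_univ, true_and] at hγ ⊢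
    exact ⟨(S.mem_map_mulLeft_iff hγ.1 w).mp hγ.2, by simp [hγ.1, hw]⟩
  · intro x hx
    simp only [mem_filter, mem_univ, true_and] at hx ⊢
    have hγ : w * x⁻¹ ≠ 0 := by simp [hw, hx.2]
    refine ⟨hγ, (S.mem_map_mulLeft_iff hγ w).mpr ?_⟩
    simpa [hw] using hx.1
  · intro γ hγ
    simp [hw]
  · intro x hx
    simp [hw]

section DoubleCount

variable {K F : Type*} [Field K] [Fintype K] [Field F] [Fintype F] [Algebra K F] [DecidableEq F]

open scoped Classical in
theorem Submodule.sum_card_filter_mem_map_mulLeft_inf (S W : Submodule K F) :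
    ∑ γ ∈ {γ | γ ≠ 0}, #{w | w ∈ S.map (LinearMap.mulLeft K γ) ⊓ W ∧ w ≠ 0}
      = (Fintype.card K ^ finrank K S - 1) * (Fintype.card K ^ finrank K W - 1) := by
  calc _ = ∑ w ∈ {w | w ∈ W ∧ w ≠ 0},
          #{γ | γ ≠ 0 ∧ w ∈ S.map (LinearMap.mulLeft K γ)} := by
        simp only [card_eq_sum_ones]
        refine sum_comm' fun γ w => ?_
        simp only [mem_filter, mem_univ, true_and, Submodule.mem_inf]
        tauto
    _ = ∑ w ∈ {w | w ∈ W ∧ w ≠ 0}, #{x | x ∈ S ∧ x ≠ 0} :=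
        sum_congr rfl fun w hw => S.card_filter_mem_map_mulLeft (mem_filter.mp hw).2.2
    _ = _ := by
        rw [sum_const, smul_eq_mul, S.card_filter_mem_ne_zero, W.card_filter_mem_ne_zero, mul_comm]

theorem Submodule.mul_sum_finrank_map_mulLeft_inf (S W : Submodule K F)
    (h01 : ∀ γ : F, γ ≠ 0 → finrank K ↥(S.map (LinearMap.mulLeft K γ) ⊓ W) ≤ 1) :
    (Fintype.card K - 1) *
        ∑ γ ∈ {γ | γ ≠ 0}, finrank K ↥(S.map (LinearMap.mulLeft K γ) ⊓ W)
      = (Fintype.card K ^ finrank K S - 1) * (Fintype.card K ^ finrank K W - 1) := by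
  classical
  rw [mul_sum, ← S.sum_card_filter_mem_map_mulLeft_inf W]
  refine sum_congr rfl fun γ hγ => ?_
  rw [Submodule.card_filter_mem_ne_zero,
    Nat.pow_sub_one_eq_mul_of_le_one (h01 γ (mem_filter.mp hγ).2)]

end DoubleCount

theorem stmt5_general {K F : Type*} [Field K] [Field F] [Algebra K F] [Fintype K] [Fintype F]
    [DecidableEq F]
    (q a m : ℕ) (hq : Fintype.card K = q)
    (A : IntermediateField K F) (hA : finrank K A = a)
    (W : Submodule K F) (hW : finrank K W = m)
    (h01 : ∀ γ : F, γ ≠ 0 →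
      finrank K ↥((Subalgebra.toSubmodule A.toSubalgebra).map (LinearMap.mulLeft K γ) ⊓ W) ≤ 1) :
    (Finset.univ.filter (fun γ : F => γ ≠ 0 ∧
        finrank K ↥((Subalgebra.toSubmodule A.toSubalgebra).map (LinearMap.mulLeft K γ) ⊓ W)
          = 1)).card
      = (q ^ a - 1) * (q ^ m - 1) / (q - 1) ∧
    ∑ γ ∈ Finset.univ.filter (fun γ : F => γ ≠ 0),
      finrank K ↥((Subalgebra.toSubmodule A.toSubalgebra).map (LinearMap.mulLeft K γ) ⊓ W)
      = (q ^ a - 1) * (q ^ m - 1) / (q - 1) := by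
  have hq1 : q - 1 ≠ 0 := by
    have := hq ▸ Fintype.one_lt_card (α := K)
    omega
  have hsum := (Subalgebra.toSubmodule A.toSubalgebra).mul_sum_finrank_map_mulLeft_inf W h01
  rw [hq, hW, show finrank K (Subalgebra.toSubmodule A.toSubalgebra) = a from hA] at hsum
  have hsum' := Nat.eq_div_of_mul_eq_right hq1 hsum
  refine ⟨?_, hsum'⟩
  rwa [← filter_filter,
    card_filter_eq_one_of_le_one _ _ fun γ hγ => h01 γ (mem_filter.mp hγ).2]

/-- if every intersection `γF_{q^a} ∩ W` has dimension `0` or `1`, then the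
number of nonzero `γ` with `dim(γF_{q^a} ∩ W) = 1` is `(q^a − 1)(q^m − 1)/(q − 1)`, and
the sum of all these dimensions equals the same quantity. -/
theorem stmt5 {K F : Type*} [Field K] [Field F] [Algebra K F] [Fintype K] [Fintype F]
    [DecidableEq F]
    (q ℓ a m : ℕ) (hq : Fintype.card K = q) (hℓ : finrank K F = ℓ) (ha : a ∣ ℓ)
    (A : IntermediateField K F) (hA : finrank K A = a)
    (W : Submodule K F) (hW : finrank K W = m)
    (h01 : ∀ γ : F, γ ≠ 0 →
      finrank K ↥((Subalgebra.toSubmodule A.toSubalgebra).map (LinearMap.mulLeft K γ) ⊓ W) ≤ 1) :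
    (Finset.univ.filter (fun γ : F => γ ≠ 0 ∧
        finrank K ↥((Subalgebra.toSubmodule A.toSubalgebra).map (LinearMap.mulLeft K γ) ⊓ W)
          = 1)).card
      = (q ^ a - 1) * (q ^ m - 1) / (q - 1) ∧
    ∑ γ ∈ Finset.univ.filter (fun γ : F => γ ≠ 0),
      finrank K ↥((Subalgebra.toSubmodule A.toSubalgebra).map (LinearMap.mulLeft K γ) ⊓ W)
      = (q ^ a - 1) * (q ^ m - 1) / (q - 1) :=
  stmt5_general q a m hq A hA W hW h01
end

section
/- Let q be a prime power, a ∣ ℓ, m ≥ 1, and suppose q^ℓ > C(q^{m-1}, 2)·((q^a − 1)/(q − 1))^2 + 1, where C(·,·) is the binomial coefficient. Then there exists an m-dimensional F_q-subspace W of F_{q^ℓ} such that dim_{F_q}(γF_{q^a} ∩ W) ∈ {0, 1} for all γ ∈ F_{q^ℓ}*. -/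
/-!
Call `W` scattered if every `β ∈ F_{q^a}` sending a nonzero vector of `W` back into `W` is a
scalar; then each `γ F_{q^a} ∩ W` is at most a line, since any two of its vectors differ by
such a `β`. A scattered `W` stays scattered when a vector `w ∉ F_{q^a} W + F_{q^a} W` is
adjoined. Such a `w` exists as long as `dim W < m`: every nonzero element of
`F_{q^a} W + F_{q^a} W` is `α x` or `α x + α' y` with `α, α' ∈ F_{q^a}^*` and `x, y` chosen
representatives of distinct `F_q`-lines of `W`, so the set has at most
`1 + N E + C(N, 2) E²` elements, where `N = (q^{dim W} - 1)/(q - 1)` and `E = q^a - 1`, and this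
is at most `1 + C(q^{m-1}, 2) ((q^a - 1)/(q - 1))² < q^ℓ`.
-/

open Module
open scoped Pointwise LinearAlgebra.Projectivization

section ScatteredSubspaces

variable {K F : Type*} [Field K] [Field F] [Algebra K F]

def IsScattered (A : IntermediateField K F) (W : Submodule K F) : Prop :=
  ∀ x ∈ W, x ≠ 0 → ∀ β ∈ A, β * x ∈ W → β ∈ (⊥ : IntermediateField K F)

section Scattered

variable {A : IntermediateField K F} {W : Submodule K F}

theorem isScattered_bot : IsScattered A ⊥ :=
  fun _ hx hx0 => absurd ((Submodule.mem_bot K).mp hx) hx0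

theorem IsScattered.finrank_map_mulLeft_inf_le_one (h : IsScattered A W) (γ : F) :
    finrank K ↥((Subalgebra.toSubmodule A.toSubalgebra).map (LinearMap.mulLeft K γ) ⊓ W)
      ≤ 1 := by
  set S := (Subalgebra.toSubmodule A.toSubalgebra).map (LinearMap.mulLeft K γ) ⊓ W
  rcases eq_or_ne S ⊥ with hS | hS
  · rw [hS, finrank_bot]
    exact zero_le_one
  obtain ⟨x, hxS, hx0⟩ := Submodule.exists_mem_ne_zero_of_ne_bot hS
  refine finrank_le_one ⟨x, hxS⟩ fun ⟨y, hyS⟩ => ?_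
  obtain ⟨⟨s, hs, rfl⟩, hxW⟩ := hxS
  obtain ⟨⟨t, ht, rfl⟩, hyW⟩ := hyS
  simp only [LinearMap.mulLeft_apply] at hxW hyW hx0 ⊢
  have hs0 : s ≠ 0 := by rintro rfl; simp at hx0
  have hyx : t * s⁻¹ * (γ * s) = γ * t := by field_simp
  obtain ⟨c, hc⟩ := IntermediateField.mem_bot.mp
    (h _ hxW hx0 _ (mul_mem ht (inv_mem hs)) (hyx ▸ hyW))
  exact ⟨c, Subtype.ext (by simp [Algebra.smul_def, hc, hyx])⟩

theorem IsScattered.sup_span_singleton (h : IsScattered A W) {w : F}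
    (hw : w ∉ (A : Set F) * W + (A : Set F) * W) : IsScattered A (W ⊔ K ∙ w) := by
  intro x hx hx0 β hβ hβx
  obtain ⟨u, hu, _, hcw, rfl⟩ := Submodule.mem_sup.mp hx
  obtain ⟨c, rfl⟩ := Submodule.mem_span_singleton.mp hcw
  obtain ⟨v, hv, _, hdw, hvx⟩ := Submodule.mem_sup.mp hβx
  obtain ⟨d, rfl⟩ := Submodule.mem_span_singleton.mp hdw
  simp only [Algebra.smul_def] at hx0 hvx
  set δ := β * algebraMap K F c - algebraMap K F d
  have key : δ * w = v - β * u := by linear_combination -hvx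
  rcases ne_or_eq δ 0 with hδ | hδ
  · have hδA : δ⁻¹ ∈ A :=
      inv_mem (sub_mem (mul_mem hβ (A.algebraMap_mem c)) (A.algebraMap_mem d))
    have hw_eq : w = δ⁻¹ * v + -(δ⁻¹ * β) * u := by
      field_simp
      linear_combination key
    exact absurd (hw_eq ▸ Set.add_mem_add (Set.mul_mem_mul hδA hv)
      (Set.mul_mem_mul (neg_mem (mul_mem hδA hβ)) hu)) hw
  rcases eq_or_ne u 0 with rfl | hu0
  · have hc : c ≠ 0 := by rintro rfl; simp at hx0
    refine IntermediateField.mem_bot.mpr ⟨d / c, ?_⟩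
    rw [map_div₀, div_eq_iff ((map_ne_zero _).mpr hc)]
    linear_combination -hδ
  · exact h u hu hu0 β hβ (by rwa [show β * u = v by linear_combination key - w * hδ])

end Scattered

section Counting

variable (A : IntermediateField K F) {W : Submodule K F}

def unitMultiples (v : F) : Set F :=
  (· * v) '' ((A : Set F) \ {0})

def unitPairs : Sym2 (ℙ K W) → Set F :=
  Sym2.lift ⟨fun L M => unitMultiples A L.rep + unitMultiples A M.rep, fun _ _ => add_comm _ _⟩

variable {A}

theorem add_mem_unitMultiples {v x y : F} (hx : x ∈ unitMultiples A v)
    (hy : y ∈ unitMultiples A v) (hxy : x + y ≠ 0) : x + y ∈ unitMultiples A v := by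
  obtain ⟨α, ⟨hα, -⟩, rfl⟩ := hx
  obtain ⟨α', ⟨hα', -⟩, rfl⟩ := hy
  refine ⟨α + α', ⟨add_mem hα hα', fun h => hxy ?_⟩, add_mul _ _ _⟩
  rw [← add_mul, Set.mem_singleton_iff.mp h, zero_mul]

theorem mul_mem_unitMultiples_rep {β u : F} (hβ : β ∈ A) (hu : u ∈ W) (hβu : β * u ≠ 0) :
    ∃ L : ℙ K W, β * u ∈ unitMultiples A L.rep := by
  have hu0 : (⟨u, hu⟩ : W) ≠ 0 := fun h =>
    hβu (by simp [show u = 0 from congrArg Subtype.val h])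
  obtain ⟨a, ha⟩ := Projectivization.exists_smul_eq_mk_rep K _ hu0
  refine ⟨Projectivization.mk K _ hu0, β * algebraMap K F ↑a⁻¹, ⟨?_, ?_⟩, ?_⟩
  · exact mul_mem hβ (A.algebraMap_mem _)
  · simpa using (mul_ne_zero_iff.mp hβu).1
  · have ha0 : algebraMap K F a ≠ 0 := by simp
    simp only [← ha, Units.smul_def, Submodule.coe_smul, Algebra.smul_def,
      Units.val_inv_eq_inv_val, map_inv₀]
    field_simp

theorem mul_subset_unitMultiples :
    (A : Set F) * W ⊆ {0} ∪ ⋃ L : ℙ K W, unitMultiples A L.rep := by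
  rintro _ ⟨β, hβ, u, hu, rfl⟩
  rcases eq_or_ne (β * u) 0 with h | h
  · exact Or.inl h
  · exact Or.inr (Set.mem_iUnion.mpr (mul_mem_unitMultiples_rep hβ hu h))

theorem mul_add_mul_subset :
    (A : Set F) * W + (A : Set F) * W ⊆
      {0} ∪ (⋃ L : ℙ K W, unitMultiples A L.rep) ∪
        ⋃ z : {z : Sym2 (ℙ K W) // ¬z.IsDiag}, unitPairs A z.1 := by
  intro _ hxy
  obtain ⟨x, hx, y, hy, rfl⟩ := Set.mem_add.mp hxy
  rcases mul_subset_unitMultiples hx with hx | hx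
  · rw [Set.mem_singleton_iff.mp hx, zero_add]
    exact Or.inl (mul_subset_unitMultiples hy)
  rcases mul_subset_unitMultiples hy with hy | hy
  · rw [Set.mem_singleton_iff.mp hy, add_zero]
    exact Or.inl (Or.inr hx)
  obtain ⟨L, hxL⟩ := Set.mem_iUnion.mp hx
  obtain ⟨M, hyM⟩ := Set.mem_iUnion.mp hy
  rcases eq_or_ne L M with rfl | hLM
  · rcases eq_or_ne (x + y) 0 with h | h
    · exact Or.inl (Or.inl h)
    · exact Or.inl (Or.inr (Set.mem_iUnion.mpr ⟨L, add_mem_unitMultiples hxL hyM h⟩))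
  · exact Or.inr (Set.mem_iUnion.mpr
      ⟨⟨s(L, M), Sym2.mk_isDiag_iff.not.mpr hLM⟩, Set.add_mem_add hxL hyM⟩)

variable [Finite F]

theorem ncard_unitMultiples_le (v : F) : (unitMultiples A v).ncard ≤ Nat.card A - 1 :=
  (Set.ncard_image_le (Set.toFinite _)).trans_eq <| by
    rw [Set.ncard_sdiff_singleton_of_mem (zero_mem A)]
    rfl

theorem ncard_unitPairs_le (z : Sym2 (ℙ K W)) :
    (unitPairs A z).ncard ≤ (Nat.card A - 1) ^ 2 := by
  induction z using Sym2.ind with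
  | h L M =>
    rw [unitPairs, Sym2.lift_mk, sq]
    exact Set.natCard_add_le.trans
      (Nat.mul_le_mul (ncard_unitMultiples_le _) (ncard_unitMultiples_le _))

theorem ncard_mul_add_mul_le :
    ((A : Set F) * W + (A : Set F) * W).ncard ≤
      1 + Nat.card (ℙ K W) * (Nat.card A - 1) +
        (Nat.card (ℙ K W)).choose 2 * (Nat.card A - 1) ^ 2 := by
  classical
  have := Fintype.ofFinite (ℙ K W)
  calc _ ≤ _ := Set.ncard_le_ncard mul_add_mul_subset (Set.toFinite _)
    _ ≤ 1 + ∑ L : ℙ K W, (unitMultiples A L.rep).ncard +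
          ∑ z : {z : Sym2 (ℙ K W) // ¬z.IsDiag}, (unitPairs A z.1).ncard := by
      grw [Set.ncard_union_le, Set.ncard_union_le, Set.ncard_singleton,
        Set.ncard_iUnion_le_of_fintype, Set.ncard_iUnion_le_of_fintype]
    _ ≤ _ := by
      grw [Finset.sum_le_card_nsmul _ _ _ fun L _ => ncard_unitMultiples_le (L.rep : F),
        Finset.sum_le_card_nsmul _ _ _ fun z _ => ncard_unitPairs_le z.1]
      simp only [Finset.card_univ, smul_eq_mul, ← Nat.card_eq_fintype_card,
        Sym2.natCard_subtype_not_diag, le_refl]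

end Counting

theorem choose_two_mul_sq_le (n p : ℕ) : n.choose 2 * p ^ 2 ≤ (n * p).choose 2 := by
  rcases Nat.eq_zero_or_pos p with rfl | hp
  · simp
  have h : p ^ 2 * (n * (n - 1)) ≤ n * p * (n * p - 1) :=
    calc p ^ 2 * (n * (n - 1)) = n * p * (n * p - p) := by rw [← Nat.sub_one_mul]; ring
      _ ≤ n * p * (n * p - 1) := Nat.mul_le_mul_left _ (Nat.sub_le_sub_left hp _)
  rw [Nat.choose_two_right, Nat.choose_two_right, mul_comm]
  exact (Nat.mul_div_le_mul_div_assoc _ _ _).trans (Nat.div_le_div_right h)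

theorem mul_add_choose_two_mul_sq_le (N p e : ℕ) :
    N * (p * e) + N.choose 2 * (p * e) ^ 2 ≤ (N * p + 1).choose 2 * e ^ 2 :=
  calc N * (p * e) + N.choose 2 * (p * e) ^ 2 = N * p * e + N.choose 2 * p ^ 2 * e ^ 2 := by ring
    _ ≤ N * p * e ^ 2 + (N * p).choose 2 * e ^ 2 :=
      add_le_add (Nat.mul_le_mul_left _ (Nat.le_self_pow two_ne_zero e))
        (Nat.mul_le_mul_right _ (choose_two_mul_sq_le N p))
    _ = (N * p + 1).choose 2 * e ^ 2 := by
      rw [Nat.choose_succ_succ' (N * p) 1, Nat.choose_one_right, add_mul]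

section Construction

variable [Fintype K] [Fintype F] {q ℓ a m : ℕ} {A : IntermediateField K F}

theorem exists_notMem_mul_add_mul (hq : Fintype.card K = q) (hℓ : finrank K F = ℓ)
    (hA : finrank K A = a)
    (hbig : q ^ ℓ > Nat.choose (q ^ (m - 1)) 2 * ((q ^ a - 1) / (q - 1)) ^ 2 + 1)
    {W : Submodule K F} (hW : finrank K W < m) :
    ∃ w, w ∉ (A : Set F) * W + (A : Set F) * W := by
  have hq1 : 1 < q := hq ▸ Fintype.one_lt_card
  have hN : Nat.card (ℙ K W) * (q - 1) + 1 = q ^ finrank K W := by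
    rw [← hq, ← Nat.card_eq_fintype_card, ← Projectivization.card' K W,
      Module.natCard_eq_pow_finrank (K := K)]
  have hE : Nat.card A - 1 = (q - 1) * ((q ^ a - 1) / (q - 1)) := by
    rw [Module.natCard_eq_pow_finrank (K := K), hA, Nat.card_eq_fintype_card, hq,
      Nat.mul_div_cancel' (Nat.sub_one_dvd_pow_sub_one q a)]
  have hlt : ((A : Set F) * W + (A : Set F) * W).ncard < (Set.univ : Set F).ncard :=
    calc _ ≤ 1 + Nat.card (ℙ K W) * (Nat.card A - 1) +
          (Nat.card (ℙ K W)).choose 2 * (Nat.card A - 1) ^ 2 := ncard_mul_add_mul_le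
      _ ≤ 1 + (q ^ finrank K W).choose 2 * ((q ^ a - 1) / (q - 1)) ^ 2 := by
        rw [hE, add_assoc, ← hN]
        exact Nat.add_le_add_left (mul_add_choose_two_mul_sq_le _ _ _) 1
      _ ≤ 1 + (q ^ (m - 1)).choose 2 * ((q ^ a - 1) / (q - 1)) ^ 2 := by
        gcongr <;> omega
      _ < (Set.univ : Set F).ncard := by
        rw [Set.ncard_univ, Module.natCard_eq_pow_finrank (K := K), Nat.card_eq_fintype_card,
          hq, hℓ]
        omega
  obtain ⟨w, -, hw⟩ := Set.exists_mem_notMem_of_ncard_lt_ncard hlt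
  exact ⟨w, hw⟩

theorem exists_isScattered_finrank_eq (hq : Fintype.card K = q) (hℓ : finrank K F = ℓ)
    (hA : finrank K A = a)
    (hbig : q ^ ℓ > Nat.choose (q ^ (m - 1)) 2 * ((q ^ a - 1) / (q - 1)) ^ 2 + 1) :
    ∀ i ≤ m, ∃ W : Submodule K F, finrank K W = i ∧ IsScattered A W
  | 0, _ => ⟨⊥, finrank_bot K F, isScattered_bot⟩
  | i + 1, hi => by
    obtain ⟨W, hW, hsc⟩ := exists_isScattered_finrank_eq hq hℓ hA hbig i (by omega)
    obtain ⟨w, hw⟩ := exists_notMem_mul_add_mul hq hℓ hA hbig (W := W) (by omega)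
    have hwW : w ∉ W := fun h => hw <| by
      simpa using Set.add_mem_add (Set.mul_mem_mul (one_mem A) h)
        (Set.mul_mem_mul (zero_mem A) (zero_mem W))
    exact ⟨W ⊔ K ∙ w, by rw [Submodule.finrank_sup_span_singleton hwW, hW],
      hsc.sup_span_singleton hw⟩

end Construction

end ScatteredSubspaces

theorem stmt6_general {K F : Type*} [Field K] [Field F] [Algebra K F] [Fintype K] [Fintype F]
    (q ℓ a m : ℕ) (hq : Fintype.card K = q) (hℓ : finrank K F = ℓ)
    (A : IntermediateField K F) (hA : finrank K A = a)
    (hbig : q ^ ℓ > Nat.choose (q ^ (m - 1)) 2 * ((q ^ a - 1) / (q - 1)) ^ 2 + 1) :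
    ∃ W : Submodule K F, finrank K W = m ∧ ∀ γ : F, γ ≠ 0 →
      finrank K ↥((Subalgebra.toSubmodule A.toSubalgebra).map (LinearMap.mulLeft K γ) ⊓ W)
        ≤ 1 := by
  obtain ⟨W, hW, hsc⟩ := exists_isScattered_finrank_eq hq hℓ hA hbig m le_rfl
  exact ⟨W, hW, fun γ _ => hsc.finrank_map_mulLeft_inf_le_one γ⟩

/-- if `a ∣ ℓ`, `m ≥ 1`, and `q^ℓ > C(q^{m-1},2)·((q^a−1)/(q−1))² + 1`, then
there is an `m`-dimensional `F_q`-subspace `W` with `dim(γF_{q^a} ∩ W) ∈ {0,1}` for all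
nonzero `γ`. -/
theorem stmt6 {K F : Type*} [Field K] [Field F] [Algebra K F] [Fintype K] [Fintype F]
    (q ℓ a m : ℕ) (hq : Fintype.card K = q) (hℓ : finrank K F = ℓ)
    (ha : a ∣ ℓ) (hm : 1 ≤ m)
    (A : IntermediateField K F) (hA : finrank K A = a)
    (hbig : q ^ ℓ > Nat.choose (q ^ (m - 1)) 2 * ((q ^ a - 1) / (q - 1)) ^ 2 + 1) :
    ∃ W : Submodule K F, finrank K W = m ∧ ∀ γ : F, γ ≠ 0 →
      finrank K ↥((Subalgebra.toSubmodule A.toSubalgebra).map (LinearMap.mulLeft K γ) ⊓ W)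
        ≤ 1 :=
  stmt6_general q ℓ a m hq hℓ A hA hbig
end
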